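/- Under a single upward shift of one worker in one firm's preference list from instance A to instance B, the set M_A \ M_B is closed under both the meet and join operations of the lattice L_A of stable matchings of A, i.e., it is a sublattice of L_A. -/
import Mathlib


/-- A stable matching instance: each worker `w` ranks firms via `wr w` (lower rank =
more preferred, rank = position in the preference list) and each firm `f` ranks
workers via `fr f`. -/
structure SMInstance (W F : Type) where
  wr : W → F → ℕ
  fr : F → W → ℕ
  wr_inj : ∀ w, Function.Injective (wr w)
  fr_inj : ∀ f, Function.Injective (fr f)

variable {W F : Type}

/-- `(w, f)` is a blocking pair for the matching `M` under instance `A`. -/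
def SMInstance.Blocking (A : SMInstance W F) (M : W ≃ F) (w : W) (f : F) : Prop :=
  M w ≠ f ∧ A.wr w f < A.wr w (M w) ∧ A.fr f w < A.fr f (M.symm f)

/-- `M` is stable under `A`: it has no blocking pair. -/
def SMInstance.Stable (A : SMInstance W F) (M : W ≃ F) : Prop :=
  ∀ w f, ¬ A.Blocking M w f

/-- Pointwise "less preferred partner" (join) of two matchings, w.r.t. the worker
preferences of `A`. -/
def worse (A : SMInstance W F) (M1 M2 : W ≃ F) (w : W) : F :=
  if A.wr w (M1 w) ≤ A.wr w (M2 w) then M2 w else M1 w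

/-- Pointwise "more preferred partner" (meet) of two matchings, w.r.t. the worker
preferences of `A`. -/
def better (A : SMInstance W F) (M1 M2 : W ≃ F) (w : W) : F :=
  if A.wr w (M1 w) ≤ A.wr w (M2 w) then M1 w else M2 w

/-- `B` is obtained from `A` by an upward shift of worker `w0` in firm `f0`'s
preference list: all other lists are unchanged, the relative order of workers other
than `w0` in `f0`'s list is preserved, and the set of workers above `w0` in `f0`'s
list only shrinks. -/
def UpShift (A B : SMInstance W F) (w0 : W) (f0 : F) : Prop :=
  B.wr = A.wr ∧ (∀ f, f ≠ f0 → B.fr f = A.fr f) ∧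
  (∀ w1 w2, w1 ≠ w0 → w2 ≠ w0 → (B.fr f0 w1 < B.fr f0 w2 ↔ A.fr f0 w1 < A.fr f0 w2)) ∧
  (∀ w', B.fr f0 w' < B.fr f0 w0 → A.fr f0 w' < A.fr f0 w0)

/-- If `M` is `A`-stable but not `B`-stable, the blocking pair must be `(w0, f0)`. -/
lemma upshift_block (A B : SMInstance W F) (w0 : W) (f0 : F) (h : UpShift A B w0 f0)
    (M : W ≃ F) (hA : A.Stable M) (hB : ¬ B.Stable M) : B.Blocking M w0 f0 := by
  obtain ⟨hw, hf, h3, h4⟩ := h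
  simp only [SMInstance.Stable, not_forall, not_not] at hB
  obtain ⟨w, f, hne, hwr, hfr⟩ := hB
  by_cases hff : f = f0
  · rw [hff] at hne hwr hfr
    by_cases hww : w = w0
    · subst hww; exact ⟨hne, hwr, hfr⟩
    · exfalso; apply hA w f0
      by_cases hv : M.symm f0 = w0
      · refine ⟨hne, by rwa [hw] at hwr, ?_⟩
        rw [hv] at hfr ⊢
        exact h4 w hfr
      · exact ⟨hne, by rwa [hw] at hwr, (h3 w _ hww hv).mp hfr⟩
  · exact absurd ⟨hne, by rwa [hw] at hwr, by rwa [hf f hff] at hfr⟩ (hA w f)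

lemma worse_mem (A : SMInstance W F) (M1 M2 : W ≃ F) (w : W) :
    worse A M1 M2 w = M1 w ∨ worse A M1 M2 w = M2 w := by
  unfold worse; split_ifs <;> simp

lemma better_mem (A : SMInstance W F) (M1 M2 : W ≃ F) (w : W) :
    better A M1 M2 w = M1 w ∨ better A M1 M2 w = M2 w := by
  unfold better; split_ifs <;> simp

lemma symm_mem (M1 M2 Mx : W ≃ F) (hmem : ∀ w, Mx w = M1 w ∨ Mx w = M2 w) (f : F) :
    Mx.symm f = M1.symm f ∨ Mx.symm f = M2.symm f := by
  rcases hmem (Mx.symm f) with e | e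
  · left; apply M1.injective; rw [M1.apply_symm_apply, ← e, Mx.apply_symm_apply]
  · right; apply M2.injective; rw [M2.apply_symm_apply, ← e, Mx.apply_symm_apply]

/-- The worker-wise join is firm-wise better than both. -/
lemma join_symm_le (A : SMInstance W F) (M1 M2 : W ≃ F)
    (h1 : A.Stable M1) (h2 : A.Stable M2) (Mj : W ≃ F)
    (hMj : ∀ w, Mj w = worse A M1 M2 w) (f : F) :
    A.fr f (Mj.symm f) ≤ A.fr f (M1.symm f) ∧ A.fr f (Mj.symm f) ≤ A.fr f (M2.symm f) := by
  set v := Mj.symm f with hvdef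
  have hv : worse A M1 M2 v = f := by rw [← hMj]; exact Mj.apply_symm_apply f
  unfold worse at hv
  split_ifs at hv with hle
  · -- M2 v = f, v = M2.symm f
    have hv2 : M2.symm f = v := by rw [← hv, Equiv.symm_apply_apply]
    refine ⟨?_, by rw [hv2]⟩
    by_cases hM1 : M1 v = f
    · rw [show M1.symm f = v by rw [← hM1, Equiv.symm_apply_apply]]
    · set u1 := M1.symm f with hu1def
      have hu1f : M1 u1 = f := M1.apply_symm_apply f
      have hu1v : u1 ≠ v := fun e => hM1 (by rw [← e, hu1f])
      by_contra hcon
      push_neg at hcon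
      have hM2u1 : M2 u1 ≠ f := fun e => hu1v (by rw [← hv2, ← e, Equiv.symm_apply_apply])
      have hwr1 : ¬ A.wr u1 f < A.wr u1 (M2 u1) := fun hlt =>
        h2 u1 f ⟨hM2u1, hlt, by rw [hv2]; exact hcon⟩
      push_neg at hwr1
      have hlt2 : A.wr u1 (M2 u1) < A.wr u1 (M1 u1) := by
        rw [hu1f]
        exact lt_of_le_of_ne hwr1 (fun e => hM2u1 (A.wr_inj u1 e))
      -- worse u1 = M1 u1 = f
      have : worse A M1 M2 u1 = f := by
        unfold worse; rw [if_neg (not_le.mpr hlt2), hu1f]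
      exact absurd (Mj.injective (by rw [hMj u1, this, hMj v]; unfold worse; rw [if_pos hle, hv]))
        hu1v
  · -- M1 v = f, v = M1.symm f, and wr v (M2 v) < wr v (M1 v)
    push_neg at hle
    have hv1 : M1.symm f = v := by rw [← hv, Equiv.symm_apply_apply]
    refine ⟨by rw [hv1], ?_⟩
    set u2 := M2.symm f with hu2def
    have hu2f : M2 u2 = f := M2.apply_symm_apply f
    have hM2v : M2 v ≠ f := fun e => absurd hle (by rw [e, hv]; exact lt_irrefl _)
    have hu2v : u2 ≠ v := fun e => hM2v (by rw [← e, hu2f])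
    by_contra hcon
    push_neg at hcon
    have hM1u2 : M1 u2 ≠ f := fun e => hu2v (by rw [← hv1, ← e, Equiv.symm_apply_apply])
    have hwr1 : ¬ A.wr u2 f < A.wr u2 (M1 u2) := fun hlt =>
      h1 u2 f ⟨hM1u2, hlt, by rw [hv1]; exact hcon⟩
    push_neg at hwr1
    have hle2 : A.wr u2 (M1 u2) ≤ A.wr u2 (M2 u2) := by rw [hu2f]; exact hwr1
    have : worse A M1 M2 u2 = f := by
      unfold worse; rw [if_pos hle2, hu2f]
    exact absurd (Mj.injective (by rw [hMj u2, this, hMj v]; unfold worse; rw [if_neg (not_le.mpr hle), hv]))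
      hu2v

/-- Under a single upward shift from `A` to `B`, the set `M_A \ M_B` is closed under
the meet and join of `L_A`: the worker-wise join and meet of two matchings stable
under `A` but not under `B` are again stable under `A` and not stable under `B`. -/
theorem stmt8 (A B : SMInstance W F) (w0 : W) (f0 : F) (h : UpShift A B w0 f0)
    (M1 M2 : W ≃ F)
    (h1A : A.Stable M1) (h1B : ¬ B.Stable M1)
    (h2A : A.Stable M2) (h2B : ¬ B.Stable M2) :
    (∀ Mj : W ≃ F, (∀ w, Mj w = worse A M1 M2 w) → A.Stable Mj ∧ ¬ B.Stable Mj) ∧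
    (∀ Mm : W ≃ F, (∀ w, Mm w = better A M1 M2 w) → A.Stable Mm ∧ ¬ B.Stable Mm) := by
  obtain ⟨n1, p1, q1⟩ := upshift_block A B w0 f0 h M1 h1A h1B
  obtain ⟨n2, p2, q2⟩ := upshift_block A B w0 f0 h M2 h2A h2B
  obtain ⟨hw, hf, h3, h4⟩ := h
  constructor
  · intro Mj hMj
    have hmem : ∀ w, Mj w = M1 w ∨ Mj w = M2 w := fun w => (hMj w) ▸ worse_mem A M1 M2 w
    constructor
    · -- A-stable
      rintro w f ⟨hne, hwr, hfr⟩
      have hsym := join_symm_le A M1 M2 h1A h2A Mj hMj f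
      rcases hmem w with e | e
      · exact h1A w f ⟨fun e' => hne (e.trans e'), e ▸ hwr, lt_of_lt_of_le hfr hsym.1⟩
      · exact h2A w f ⟨fun e' => hne (e.trans e'), e ▸ hwr, lt_of_lt_of_le hfr hsym.2⟩
    · -- not B-stable
      intro hs
      apply hs w0 f0
      have hwr' : B.wr w0 f0 < B.wr w0 (Mj w0) := by
        rcases hmem w0 with e | e
        · rw [e]; exact p1
        · rw [e]; exact p2
      refine ⟨fun e => absurd (e ▸ hwr') (lt_irrefl _), hwr', ?_⟩
      rcases symm_mem M1 M2 Mj hmem f0 with e | e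
      · rw [e]; exact q1
      · rw [e]; exact q2
  · intro Mm hMm
    have hmem : ∀ w, Mm w = M1 w ∨ Mm w = M2 w := fun w => (hMm w) ▸ better_mem A M1 M2 w
    have hmin : ∀ w, A.wr w (Mm w) ≤ A.wr w (M1 w) ∧ A.wr w (Mm w) ≤ A.wr w (M2 w) := by
      intro w
      rw [hMm w]; unfold better
      split_ifs with hle
      · exact ⟨le_refl _, hle⟩
      · exact ⟨le_of_lt (not_le.mp hle), le_refl _⟩
    constructor
    · rintro w f ⟨hne, hwr, hfr⟩
      rcases symm_mem M1 M2 Mm hmem f with e | e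
      · refine h1A w f ⟨?_, lt_of_lt_of_le hwr (hmin w).1, e ▸ hfr⟩
        intro e'
        exact absurd (lt_of_lt_of_le hwr ((hmin w).1.trans (e' ▸ le_refl _))) (lt_irrefl _)
      · refine h2A w f ⟨?_, lt_of_lt_of_le hwr (hmin w).2, e ▸ hfr⟩
        intro e'
        exact absurd (lt_of_lt_of_le hwr ((hmin w).2.trans (e' ▸ le_refl _))) (lt_irrefl _)
    · intro hs
      apply hs w0 f0
      have hwr' : B.wr w0 f0 < B.wr w0 (Mm w0) := by
        rcases hmem w0 with e | e
        · rw [e]; exact p1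
        · rw [e]; exact p2
      refine ⟨fun e => absurd (e ▸ hwr') (lt_irrefl _), hwr', ?_⟩
      rcases symm_mem M1 M2 Mm hmem f0 with e | e
      · rw [e]; exact q1
      · rw [e]; exact q2
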